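/- arXiv:math/0411468 — 3 statements merged into one kernel-verified Lean document; each statement's English description precedes it below -/
import Mathlib

section
/- Let G₀, G₁ be groups, s, t : G₁ → G₀ group homomorphisms, and ι : G₀ → G₁ a group homomorphism with s(ι(x)) = x and t(ι(x)) = x for all x ∈ G₀. Let P = {(a,b) ∈ G₁ × G₁ : s(a) = t(b)}, a subgroup of G₁ × G₁. Suppose c : P → G₁ is a group homomorphism satisfying the unit laws c(ι(t(b)), b) = b for all b ∈ G₁ and c(a, ι(s(a))) = a for all a ∈ G₁. Then c(a,b) = a · ι(s(a))⁻¹ · b for every (a,b) ∈ P. -/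
/-- Uniqueness of the vertical composition in a strict 2-group: any group
homomorphism `c` on the pullback subgroup of composable pairs satisfying the
unit laws is given by `c(a,b) = a * ι(s a)⁻¹ * b`. -/
theorem vertical_composition_unique {G₀ G₁ : Type*} [Group G₀] [Group G₁]
    (s t : G₁ →* G₀) (ι : G₀ →* G₁)
    (hs : ∀ x : G₀, s (ι x) = x) (ht : ∀ x : G₀, t (ι x) = x)
    (P : Subgroup (G₁ × G₁)) (hP : ∀ p : G₁ × G₁, p ∈ P ↔ s p.1 = t p.2)
    (c : P →* G₁)
    (hunit_left : ∀ b : G₁, c ⟨(ι (t b), b), (hP _).mpr (hs (t b))⟩ = b)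
    (hunit_right : ∀ a : G₁, c ⟨(a, ι (s a)), (hP _).mpr (ht (s a)).symm⟩ = a) :
    ∀ (a b : G₁) (hab : s a = t b),
      c ⟨(a, b), (hP _).mpr hab⟩ = a * (ι (s a))⁻¹ * b := by
  intro a b hab
  have hmem2 : ((1 : G₁), (ι (s a))⁻¹ * b) ∈ P := by
    rw [hP]
    simp [ht, hab]
  have hsplit : (⟨(a, b), (hP _).mpr hab⟩ : P) =
      (⟨(a, ι (s a)), (hP _).mpr (ht (s a)).symm⟩ : P) * ⟨((1 : G₁), (ι (s a))⁻¹ * b), hmem2⟩ := by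
    ext <;> simp
  have hone : c ⟨((1 : G₁), (ι (s a))⁻¹ * b), hmem2⟩ = (ι (s a))⁻¹ * b := by
    have h1 : t ((ι (s a))⁻¹ * b) = 1 := by simp [ht, hab]
    have := hunit_left ((ι (s a))⁻¹ * b)
    simpa [h1] using this
  rw [hsplit, map_mul, hunit_right, hone, mul_assoc]
end

section
/- Let (G, H, ⊳, ∂) be a crossed module: G and H are groups, G acts on H by automorphisms via a group homomorphism G → Aut(H), g ↦ (h ↦ g ⊳ h), and ∂ : H → G is a group homomorphism satisfying ∂(g ⊳ h) = g·∂(h)·g⁻¹ for all g ∈ G, h ∈ H, and ∂(h) ⊳ h' = h·h'·h⁻¹ for all h, h' ∈ H. On the semidirect product H ⋊ G define s(h,g) := g and t(h,g) := ∂(h)·g. Then every element of ker s commutes with every element of ker t: for all a, b ∈ H ⋊ G with s(a) = 1 and t(b) = 1, a·b = b·a. -/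
/-- For a crossed module `(G, H, ⊳, ∂)` with `s(h,g) = g` and `t(h,g) = ∂(h)·g`
on `H ⋊ G`, every element of `ker s` commutes with every element of `ker t`. -/
theorem crossedModule_kernels_commute {G H : Type*} [Group G] [Group H]
    (act : G →* MulAut H) (d : H →* G)
    (pf1 : ∀ (g : G) (h : H), d (act g h) = g * d h * g⁻¹)
    (pf2 : ∀ h h' : H, act (d h) h' = h * h' * h⁻¹) :
    ∀ a b : H ⋊[act] G, a.right = 1 → d b.left * b.right = 1 → a * b = b * a := by
  rintro ⟨h₁, g₁⟩ ⟨h₂, g₂⟩ h1 h2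
  change g₁ = 1 at h1
  change d h₂ * g₂ = 1 at h2
  subst h1
  have hg₂ : g₂ = (d h₂)⁻¹ := by
    rw [eq_comm, inv_eq_iff_mul_eq_one]; exact h2
  subst hg₂
  ext
  · show h₁ * act 1 h₂ = h₂ * act (d h₂)⁻¹ h₁
    have := pf2 h₂⁻¹ h₁
    simp only [map_inv] at this
    simp [this, mul_assoc]
  · simp
end

section
/- Let k be a field, G and H finite groups, and f₁, f₂ : G → H group homomorphisms. Let E = {g ∈ G : f₁(g) = f₂(g)} be the equalizer subgroup, and let r : (G → k) → (E → k) be the restriction algebra homomorphism f ↦ f|_E (where function spaces carry pointwise algebra structure). Then r is surjective, and its kernel equals the ideal of (G → k) generated by the set {u ∘ f₁ − u ∘ f₂ : u ∈ (H → k)}; moreover this ideal equals the k-linear span of the functions (δ_h ∘ f₁ − δ_h ∘ f₂)·δ_{g'} for h ∈ H and g' ∈ G, which in turn equals the span of {δ_{g'} : g' ∈ G, f₁(g') ≠ f₂(g')}. -/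
/-- The function algebra functor preserves equalizers: for group homomorphisms
`f₁, f₂ : G → H` of finite groups with equalizer subgroup
`E = {g : f₁ g = f₂ g}`, the restriction homomorphism `r : k(G) → k(E)` is
surjective, its kernel is the ideal generated by `{u∘f₁ - u∘f₂ : u ∈ k(H)}`,
and this ideal is the span of the functions `(δ_h∘f₁ - δ_h∘f₂)·δ_{g'}`, which
equals the span of the `δ_{g'}` with `f₁ g' ≠ f₂ g'`. -/
theorem functionAlgebra_preserves_equalizer (k : Type*) [Field k]
    {G H : Type*} [Group G] [Group H] [Finite G] [Finite H]
    [DecidableEq G] [DecidableEq H] (f₁ f₂ : G →* H)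
    (r : (G → k) →ₐ[k] ({g : G // f₁ g = f₂ g} → k))
    (hr : ∀ (f : G → k) (e : {g : G // f₁ g = f₂ g}), r f e = f e.val) :
    Function.Surjective r ∧
    RingHom.ker r =
      Ideal.span {x : G → k | ∃ u : H → k, x = fun g => u (f₁ g) - u (f₂ g)} ∧
    (Ideal.span {x : G → k | ∃ u : H → k,
        x = fun g => u (f₁ g) - u (f₂ g)}).restrictScalars k =
      Submodule.span k {x : G → k | ∃ (h : H) (g' : G),
        x = fun g => ((if f₁ g = h then (1 : k) else 0) -
          (if f₂ g = h then (1 : k) else 0)) * (if g = g' then (1 : k) else 0)} ∧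
    (Ideal.span {x : G → k | ∃ u : H → k,
        x = fun g => u (f₁ g) - u (f₂ g)}).restrictScalars k =
      Submodule.span k {x : G → k | ∃ g' : G, f₁ g' ≠ f₂ g' ∧
        x = fun g => if g = g' then (1 : k) else 0} := by
  classical
  have : Fintype G := Fintype.ofFinite G
  set S1 : Set (G → k) :=
    {x : G → k | ∃ u : H → k, x = fun g => u (f₁ g) - u (f₂ g)} with hS1
  set S2 : Set (G → k) := {x : G → k | ∃ (h : H) (g' : G),
      x = fun g => ((if f₁ g = h then (1 : k) else 0) -
        (if f₂ g = h then (1 : k) else 0)) * (if g = g' then (1 : k) else 0)} with hS2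
  set S3 : Set (G → k) := {x : G → k | ∃ g' : G, f₁ g' ≠ f₂ g' ∧
      x = fun g => if g = g' then (1 : k) else 0} with hS3
  -- S3 lies in the ideal generated by S1
  have hS3sub : S3 ⊆ (Ideal.span S1 : Set (G → k)) := by
    rintro x ⟨g', hne, rfl⟩
    have ha : (fun g => (if f₁ g = f₁ g' then (1:k) else 0)
        - (if f₂ g = f₁ g' then (1:k) else 0)) ∈ Ideal.span S1 :=
      Ideal.subset_span ⟨fun h => if h = f₁ g' then (1:k) else 0, rfl⟩
    have hx : (fun g => if g = g' then (1:k) else 0) =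
        (fun g => if g = g' then (1:k) else 0) *
        (fun g => (if f₁ g = f₁ g' then (1:k) else 0)
          - (if f₂ g = f₁ g' then (1:k) else 0)) := by
      funext g
      by_cases hg : g = g'
      · subst hg
        simp [hne.symm]
      · simp [hg]
    rw [hx]
    exact Ideal.mul_mem_left _ _ ha
  -- the ideal generated by S1 is in the kernel
  have hspan_le : Ideal.span S1 ≤ RingHom.ker r := by
    rw [Ideal.span_le]
    rintro x ⟨u, rfl⟩
    rw [SetLike.mem_coe, RingHom.mem_ker]
    funext e
    rw [hr]
    simp [e.2]
  -- the kernel is contained in the span of S3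
  have hker_sub : (RingHom.ker r : Set (G → k)) ⊆
      (Submodule.span k S3 : Set (G → k)) := by
    intro x hx
    have hx0 : ∀ g : G, f₁ g = f₂ g → x g = 0 := by
      intro g hg
      have h0 : r x = 0 := hx
      have := congrFun h0 ⟨g, hg⟩
      rwa [hr] at this
    have hdec : x = ∑ g' : G, x g' • fun g => if g = g' then (1:k) else 0 := by
      funext g
      simp [Finset.sum_apply, Pi.smul_apply, smul_eq_mul, mul_ite, mul_one,
        mul_zero, Finset.sum_ite_eq]
    rw [hdec]
    refine Submodule.sum_mem _ fun g' _ => ?_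
    by_cases hc : f₁ g' = f₂ g'
    · rw [hx0 g' hc, zero_smul]
      exact Submodule.zero_mem _
    · exact Submodule.smul_mem _ _ (Submodule.subset_span ⟨g', hc, rfl⟩)
  have h31 : Submodule.span k S3 ≤ (Ideal.span S1).restrictScalars k :=
    Submodule.span_le.mpr hS3sub
  -- span S2 = span S3
  have h23 : Submodule.span k S2 = Submodule.span k S3 := by
    apply le_antisymm
    · rw [Submodule.span_le]
      rintro x ⟨h, g', rfl⟩
      by_cases hc : f₁ g' = f₂ g'
      · have : (fun g => ((if f₁ g = h then (1:k) else 0)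
            - (if f₂ g = h then (1:k) else 0)) * (if g = g' then (1:k) else 0)) = 0 := by
          funext g
          by_cases hg : g = g'
          · subst hg; rw [hc]; simp
          · simp [hg]
        rw [this]
        exact Submodule.zero_mem _
      · have : (fun g => ((if f₁ g = h then (1:k) else 0)
            - (if f₂ g = h then (1:k) else 0)) * (if g = g' then (1:k) else 0)) =
            ((if f₁ g' = h then (1:k) else 0) - (if f₂ g' = h then (1:k) else 0)) •
            fun g => if g = g' then (1:k) else 0 := by
          funext g
          by_cases hg : g = g'
          · subst hg; simp
          · simp [hg]
        rw [this]
        exact Submodule.smul_mem _ _ (Submodule.subset_span ⟨g', hc, rfl⟩)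
    · rw [Submodule.span_le]
      rintro x ⟨g', hne, rfl⟩
      have : (fun g => if g = g' then (1:k) else 0) =
          fun g => ((if f₁ g = f₁ g' then (1:k) else 0)
            - (if f₂ g = f₁ g' then (1:k) else 0)) * (if g = g' then (1:k) else 0) := by
        funext g
        by_cases hg : g = g'
        · subst hg; simp [hne.symm]
        · simp [hg]
      rw [this]
      exact Submodule.subset_span ⟨f₁ g', g', rfl⟩
  have hI3 : (Ideal.span S1).restrictScalars k = Submodule.span k S3 := by
    apply le_antisymm
    · intro x hx
      exact hker_sub (hspan_le hx)
    · exact h31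
  refine ⟨?_, ?_, ?_, hI3⟩
  · intro φ
    refine ⟨fun g => if h : f₁ g = f₂ g then φ ⟨g, h⟩ else 0, ?_⟩
    funext e
    rw [hr, dif_pos e.2]
  · apply le_antisymm
    · intro x hx
      exact h31 (hker_sub hx)
    · exact hspan_le
  · rw [hI3, h23]
end
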